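/- arXiv:2602.10413 — 2 statements merged into one kernel-verified Lean document; each statement's English description precedes it below -/
import Mathlib

section
/- Let E be a vector space and {Y_λ}_{λ∈Λ} a nested family of linear subspaces of E^ℕ, each closed under subsequences and spreading of zeros. Let x⁽¹⁾,…,x⁽ⁿ⁾ ∈ E^ℕ with x⁽ᵏ⁾ ∉ ⋃_λ Y_λ for all k. Then there exists a partition ℕ = ℕ' ∪ ℕ'' into infinite disjoint sets such that x⁽ᵏ⁾|_{ℕ'} ∉ ⋃_λ Y_λ for every k = 1,…,n. -/
/-- `spread f x` places `x i` at position `f i` and `0` elsewhere. -/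
noncomputable def spread {E : Type*} [Zero E] (f : ℕ → ℕ) (x : ℕ → E) : ℕ → E :=
  Function.extend f x 0

private lemma exists_sup_aux {E : Type*} [AddCommGroup E] [Module ℝ E] {Λ : Type*}
    (Y : Λ → Submodule ℝ (ℕ → E))
    (hnested : ∀ lam₁ lam₂ : Λ, Y lam₁ ≤ Y lam₂ ∨ Y lam₂ ≤ Y lam₁) :
    ∀ (m : ℕ) (lam : Fin (m + 1) → Λ), ∃ μ, ∀ j, Y (lam j) ≤ Y μ := by
  intro m
  induction m with
  | zero => exact fun lam => ⟨lam 0, fun j => by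
      have : j = 0 := Fin.ext (by omega)
      rw [this]⟩
  | succ m ih =>
    intro lam
    obtain ⟨μ, hμ⟩ := ih fun j => lam j.castSucc
    rcases hnested (lam (Fin.last _)) μ with h | h
    · refine ⟨μ, fun j => ?_⟩
      refine Fin.lastCases ?_ ?_ j
      · exact h
      · exact fun i => hμ i
    · refine ⟨lam (Fin.last _), fun j => ?_⟩
      refine Fin.lastCases ?_ ?_ j
      · exact le_rfl
      · exact fun i => (hμ i).trans h

theorem stmt7 {E : Type*} [AddCommGroup E] [Module ℝ E] {Λ : Type*}
    (Y : Λ → Submodule ℝ (ℕ → E))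
    (hnested : ∀ lam₁ lam₂ : Λ, Y lam₁ ≤ Y lam₂ ∨ Y lam₂ ≤ Y lam₁)
    (hsub : ∀ (lam : Λ) (y : ℕ → E) (f : ℕ → ℕ), StrictMono f → y ∈ Y lam → y ∘ f ∈ Y lam)
    (hspread : ∀ (lam : Λ) (x : ℕ → E) (f : ℕ → ℕ), StrictMono f → x ∈ Y lam →
      spread f x ∈ Y lam)
    {n : ℕ} (x : Fin n → (ℕ → E)) (hx : ∀ (k : Fin n) (lam : Λ), x k ∉ Y lam) :
    ∃ f g : ℕ → ℕ, StrictMono f ∧ StrictMono g ∧ (Set.range f)ᶜ = Set.range g ∧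
      ∀ (k : Fin n) (lam : Λ), x k ∘ f ∉ Y lam := by
  classical
  set N := n + 2 with hNdef
  have hN0 : 0 < N := by omega
  -- the residue classes mod N
  set p : Fin N → ℕ → Prop := fun j m => m % N = (j : ℕ) with hpdef
  have hpinf : ∀ j, (setOf (p j)).Infinite := by
    intro j
    apply Set.infinite_of_injective_forall_mem (f := fun k : ℕ => (j : ℕ) + k * N)
    case hi =>
      intro a b hab
      simp only at hab
      have : a * N = b * N := by omega
      exact Nat.eq_of_mul_eq_mul_right hN0 this
    case hf =>
      intro k
      show ((j : ℕ) + k * N) % N = (j : ℕ)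
      rw [Nat.add_mul_mod_self_right]
      exact Nat.mod_eq_of_lt j.isLt
  -- restriction lemma: membership passes to sub-subsequences
  have hrestrict : ∀ (q r : ℕ → Prop), (setOf q).Infinite → (setOf r).Infinite →
      (∀ m, q m → r m) → ∀ (y : ℕ → E) (lam : Λ),
      y ∘ Nat.nth r ∈ Y lam → y ∘ Nat.nth q ∈ Y lam := by
    intro q r hq hr hqr y lam hy
    have h1 : StrictMono (fun a => Nat.count r (Nat.nth q a)) := by
      intro a b hab
      exact Nat.count_strict_mono (hqr _ (Nat.nth_mem_of_infinite hq a))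
        ((Nat.nth_strictMono hq) hab)
    have h2 : (y ∘ Nat.nth r) ∘ (fun a => Nat.count r (Nat.nth q a)) = y ∘ Nat.nth q := by
      funext a
      simp only [Function.comp_apply]
      rw [Nat.nth_count (hqr _ (Nat.nth_mem_of_infinite hq a))]
    have := hsub lam _ _ h1 hy
    rwa [h2] at this
  -- decomposition: if every residue-class restriction is in the union, so is y
  have hdecomp : ∀ y : ℕ → E, (∀ j : Fin N, ∃ lam, y ∘ Nat.nth (p j) ∈ Y lam) →
      ∃ lam, y ∈ Y lam := by
    intro y h
    choose lam hlam using h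
    obtain ⟨μ, hμ⟩ := exists_sup_aux Y hnested (n + 1) lam
    refine ⟨μ, ?_⟩
    have hsum : y = ∑ j : Fin N, spread (Nat.nth (p j)) (y ∘ Nat.nth (p j)) := by
      funext m
      have hm : m % N < N := Nat.mod_lt _ hN0
      set j0 : Fin N := ⟨m % N, hm⟩ with hj0def
      have hj0 : p j0 m := rfl
      rw [Finset.sum_apply]
      rw [Finset.sum_eq_single j0]
      · have hc : Nat.nth (p j0) (Nat.count (p j0) m) = m := Nat.nth_count hj0
        symm
        calc spread (Nat.nth (p j0)) (y ∘ Nat.nth (p j0)) m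
            = spread (Nat.nth (p j0)) (y ∘ Nat.nth (p j0))
                (Nat.nth (p j0) (Nat.count (p j0) m)) := by rw [hc]
          _ = y m := by
              rw [spread, Function.Injective.extend_apply (Nat.nth_injective (hpinf j0))]
              simp [hc]
      · intro j _ hj
        rw [spread, Function.extend_apply']
        · rfl
        · rintro ⟨a, ha⟩
          have hmem : p j (Nat.nth (p j) a) := Nat.nth_mem_of_infinite (hpinf j) a
          rw [ha] at hmem
          apply hj
          apply Fin.ext
          show (j : ℕ) = m % N
          exact hmem.symm
      · intro habs
        exact absurd (Finset.mem_univ j0) habs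
    rw [hsum]
    exact Submodule.sum_mem _ fun j _ =>
      hμ j (hspread (lam j) _ _ (Nat.nth_strictMono (hpinf j)) (hlam j))
  -- for each k choose a good residue class
  have hstep : ∀ k : Fin n, ∃ j : Fin N, ∀ lam, x k ∘ Nat.nth (p j) ∉ Y lam := by
    intro k
    by_contra h
    push_neg at h
    obtain ⟨lam, hlam⟩ := hdecomp (x k) fun j => h j
    exact hx k lam hlam
  choose jj hjj using hstep
  -- the good set of residues and an avoided residue
  set S : Finset (Fin N) := insert 0 (Finset.image jj Finset.univ) with hSdef
  have hScard : S.card < N := by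
    have h1 : S.card ≤ (Finset.image jj Finset.univ).card + 1 := Finset.card_insert_le _ _
    have h2 : (Finset.image jj Finset.univ).card ≤ (Finset.univ : Finset (Fin n)).card :=
      Finset.card_image_le
    simp only [Finset.card_univ, Fintype.card_fin] at h2
    omega
  obtain ⟨j₀, hj₀⟩ : ∃ j₀ : Fin N, j₀ ∉ S := by
    by_contra h
    push_neg at h
    have : S = Finset.univ := Finset.eq_univ_iff_forall.2 h
    rw [this, Finset.card_univ, Fintype.card_fin] at hScard
    omega
  set q : ℕ → Prop := fun m => (⟨m % N, Nat.mod_lt _ hN0⟩ : Fin N) ∈ S with hqdef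
  have hqinf : (setOf q).Infinite := by
    apply Set.infinite_of_injective_forall_mem (f := fun k : ℕ => k * N)
    case hi =>
      intro a b hab
      simp only at hab
      exact Nat.eq_of_mul_eq_mul_right hN0 hab
    case hf =>
      intro k
      show (⟨(k * N) % N, _⟩ : Fin N) ∈ S
      have : (⟨(k * N) % N, Nat.mod_lt _ hN0⟩ : Fin N) = 0 := by
        apply Fin.ext
        simp [Nat.mul_mod_left]
      rw [this]
      exact Finset.mem_insert_self _ _
  have hq'inf : (setOf fun m => ¬ q m).Infinite := by
    apply Set.infinite_of_injective_forall_mem (f := fun k : ℕ => (j₀ : ℕ) + k * N)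
    case hi =>
      intro a b hab
      simp only at hab
      have : a * N = b * N := by omega
      exact Nat.eq_of_mul_eq_mul_right hN0 this
    case hf =>
      intro k
      show ¬ q ((j₀ : ℕ) + k * N)
      intro hc
      have : (⟨((j₀ : ℕ) + k * N) % N, Nat.mod_lt _ hN0⟩ : Fin N) = j₀ := by
        apply Fin.ext
        simp [Nat.add_mul_mod_self_right, Nat.mod_eq_of_lt j₀.isLt]
      have hc' : (⟨((j₀ : ℕ) + k * N) % N, Nat.mod_lt _ hN0⟩ : Fin N) ∈ S := hc
      rw [this] at hc'
      exact hj₀ hc'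
  refine ⟨Nat.nth q, Nat.nth (fun m => ¬ q m), Nat.nth_strictMono hqinf,
    Nat.nth_strictMono hq'inf, ?_, ?_⟩
  · rw [Nat.range_nth_of_infinite hqinf, Nat.range_nth_of_infinite hq'inf]
    ext m
    simp
  · intro k lam h
    apply hjj k lam
    refine hrestrict (p (jj k)) q (hpinf _) hqinf ?_ (x k) lam h
    intro m hm
    show (⟨m % N, Nat.mod_lt _ hN0⟩ : Fin N) ∈ S
    have : (⟨m % N, Nat.mod_lt _ hN0⟩ : Fin N) = jj k := Fin.ext hm
    rw [this]
    exact Finset.mem_insert_of_mem (Finset.mem_image_of_mem _ (Finset.mem_univ k))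
end

section
/- For every 0 < p < ∞, the identity operator on ℓ₁ is not absolutely p-summing: there exists a weakly p-summable sequence (x_j) in ℓ₁ such that ∑_j ‖x_j‖₁^p = ∞. -/
/-!
Let `N = 2 ^ m` and let `(w_k)` be the `N` Walsh vectors `±1/N` on `N` coordinates of `ℓ₁`, each
of norm `1`. For a functional `φ` with `b_i = φ(e_i)`, the numbers `φ(w_k)` are the normalized
Walsh transform of `b`; by orthogonality of the Walsh characters (Parseval) their mean square
is at most `‖φ‖² / N`, and by Jensen (for `p ≤ 2`) or `|φ(w_k)| ≤ ‖φ‖` (for `p ≥ 2`) the mean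
of `|φ(w_k)|^p` is at most `‖φ‖^p N^{-min(1, p/2)}`. Scaling the `m`-th block by `N^{-1/p}`
makes every block contribute exactly `1` to `∑ ‖x‖^p`, but only `‖φ‖^p N^{-min(1, p/2)}`, a
geometric sequence in `m`, to `∑ |φ(x)|^p`.
-/

open Finset

section PowerMeans

variable {κ : Type*} {s : Finset κ} {w t : κ → ℝ} {p : ℝ}

lemma sum_mul_abs_rpow_le_of_le_two (hw₀ : ∀ k ∈ s, 0 ≤ w k) (hw₁ : ∑ k ∈ s, w k = 1)
    (hp₀ : 0 ≤ p) (hp₂ : p ≤ 2) :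
    ∑ k ∈ s, w k * |t k| ^ p ≤ (∑ k ∈ s, w k * t k ^ 2) ^ (p / 2) := by
  have hpow : ∀ k, |t k| ^ p = (t k ^ 2) ^ (p / 2) := fun k => by
    rw [← sq_abs, ← Real.rpow_natCast, ← Real.rpow_mul (abs_nonneg _)]
    ring_nf
  simp only [hpow]
  exact (Real.concaveOn_rpow (by positivity) (by linarith)).le_map_sum hw₀ hw₁
    fun k _ => Set.mem_Ici.mpr (sq_nonneg _)

lemma sum_mul_abs_rpow_le_of_two_le {M : ℝ} (hw₀ : ∀ k ∈ s, 0 ≤ w k) (hp₂ : 2 ≤ p)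
    (ht : ∀ k ∈ s, |t k| ≤ M) :
    ∑ k ∈ s, w k * |t k| ^ p ≤ M ^ (p - 2) * ∑ k ∈ s, w k * t k ^ 2 := by
  rw [mul_sum]
  refine sum_le_sum fun k hk => ?_
  have hsplit : |t k| ^ p = |t k| ^ (p - 2) * t k ^ 2 := by
    rw [← sq_abs, ← Real.rpow_natCast, ← Real.rpow_add' (abs_nonneg _) (by norm_num; linarith)]
    norm_num
  rw [hsplit, mul_left_comm]
  have hwk := hw₀ k hk
  gcongr
  exact ht k hk

end PowerMeans

section Walsh

variable {ι : Type*} [Fintype ι]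

/-- The character `i ↦ (-1) ^ ⟨k, i⟩` of the group `ι → ZMod 2`, with `Bool` for `ZMod 2`. -/
noncomputable def walsh (k i : ι → Bool) : ℝ :=
  ∏ j, if k j && i j then -1 else 1

lemma walsh_comm (k i : ι → Bool) : walsh k i = walsh i k := by
  simp only [walsh, Bool.and_comm]

lemma abs_walsh (k i : ι → Bool) : |walsh k i| = 1 := by
  rw [walsh, abs_prod]
  exact prod_eq_one fun j _ => by split <;> simp

lemma sum_walsh_mul_walsh [DecidableEq ι] (k l : ι → Bool) :
    ∑ i, walsh k i * walsh l i = if k = l then 2 ^ Fintype.card ι else 0 := by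
  set f : ι → Bool → ℝ := fun j b => (if k j && b then -1 else 1) * (if l j && b then -1 else 1)
  have factor : ∀ j, ∑ b, f j b = if k j = l j then 2 else 0 := fun j => by
    simp only [f]; cases k j <;> cases l j <;> norm_num
  simp only [walsh, ← prod_mul_distrib]
  rw [← Fintype.prod_sum f, Fintype.prod_congr _ _ factor]
  split_ifs with hkl
  · simp [hkl]
  · obtain ⟨j, hj⟩ := Function.ne_iff.mp hkl
    exact prod_eq_zero (mem_univ j) (if_neg hj)

lemma sum_sq_sum_walsh_mul [DecidableEq ι] (b : (ι → Bool) → ℝ) :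
    ∑ k, (∑ i, walsh k i * b i) ^ 2 = 2 ^ Fintype.card ι * ∑ i, b i ^ 2 := by
  have expand : ∀ k, (∑ i, walsh k i * b i) ^ 2
      = ∑ i, ∑ i', b i * b i' * (walsh i k * walsh i' k) := fun k => by
    rw [sq, sum_mul_sum]
    refine sum_congr rfl fun i _ => sum_congr rfl fun i' _ => ?_
    rw [walsh_comm k i, walsh_comm k i']
    ring
  calc ∑ k, (∑ i, walsh k i * b i) ^ 2
      = ∑ i, ∑ i', b i * b i' * ∑ k, walsh i k * walsh i' k := by
        simp only [expand, mul_sum]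
        rw [sum_comm]
        exact sum_congr rfl fun i _ => sum_comm
    _ = 2 ^ Fintype.card ι * ∑ i, b i ^ 2 := by
        simp [sum_walsh_mul_walsh, mul_sum, sq, mul_comm]

end Walsh

section WalshTransform

variable {ι : Type*} [Fintype ι] [DecidableEq ι] {b : (ι → Bool) → ℝ} {M : ℝ}

lemma abs_walsh_transform_le (hb : ∀ i, |b i| ≤ M) (k : ι → Bool) :
    |(2 ^ Fintype.card ι : ℝ)⁻¹ * ∑ i, walsh k i * b i| ≤ M := by
  have hsum : |∑ i, walsh k i * b i| ≤ 2 ^ Fintype.card ι * M :=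
    calc |∑ i, walsh k i * b i| ≤ ∑ i, |walsh k i * b i| := abs_sum_le_sum_abs _ _
      _ ≤ ∑ _i : ι → Bool, M := sum_le_sum fun i _ => by
          rw [abs_mul, abs_walsh, one_mul]; exact hb i
      _ = 2 ^ Fintype.card ι * M := by simp
  rw [abs_mul, abs_inv, abs_of_pos (by positivity), inv_mul_le_iff₀ (by positivity)]
  exact hsum

lemma sum_sq_walsh_transform_le (hb : ∀ i, |b i| ≤ M) :
    ∑ k, (2 ^ Fintype.card ι : ℝ)⁻¹ * ((2 ^ Fintype.card ι : ℝ)⁻¹ * ∑ i, walsh k i * b i) ^ 2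
      ≤ (2 ^ Fintype.card ι : ℝ)⁻¹ * M ^ 2 := by
  set N : ℝ := 2 ^ Fintype.card ι with hN
  have hb₂ : ∑ i, b i ^ 2 ≤ N * M ^ 2 :=
    calc ∑ i, b i ^ 2 ≤ ∑ _i : ι → Bool, M ^ 2 := sum_le_sum fun i _ => by
          rw [← sq_abs]; exact pow_le_pow_left₀ (abs_nonneg _) (hb i) 2
      _ = N * M ^ 2 := by simp [hN]
  calc ∑ k, N⁻¹ * (N⁻¹ * ∑ i, walsh k i * b i) ^ 2
      = N⁻¹ ^ 3 * ∑ k, (∑ i, walsh k i * b i) ^ 2 := by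
        rw [mul_sum]; exact sum_congr rfl fun k _ => by ring
    _ = N⁻¹ ^ 2 * ∑ i, b i ^ 2 := by
        rw [sum_sq_sum_walsh_mul, ← hN]; field_simp
    _ ≤ N⁻¹ ^ 2 * (N * M ^ 2) := by gcongr
    _ = N⁻¹ * M ^ 2 := by field_simp

lemma sum_abs_walsh_transform_rpow_le {p : ℝ} (hp : 0 < p) (hb : ∀ i, |b i| ≤ M) :
    ∑ k, (2 ^ Fintype.card ι : ℝ)⁻¹ * |(2 ^ Fintype.card ι : ℝ)⁻¹ * ∑ i, walsh k i * b i| ^ p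
      ≤ M ^ p * ((2 : ℝ) ^ (-min 1 (p / 2))) ^ Fintype.card ι := by
  set N : ℝ := 2 ^ Fintype.card ι with hN
  have hM : 0 ≤ M := (abs_nonneg _).trans (hb fun _ => false)
  rcases le_total 2 p with hp₂ | hp₂
  · have hMp : M ^ (p - 2) * M ^ 2 = M ^ p := by
      rw [← Real.rpow_natCast, ← Real.rpow_add' hM (by norm_num; linarith)]
      norm_num
    calc _ ≤ M ^ (p - 2) * ∑ k, N⁻¹ * (N⁻¹ * ∑ i, walsh k i * b i) ^ 2 :=
          sum_mul_abs_rpow_le_of_two_le (fun _ _ => by positivity) hp₂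
            fun k _ => abs_walsh_transform_le hb k
      _ ≤ M ^ (p - 2) * (N⁻¹ * M ^ 2) := by gcongr; exact sum_sq_walsh_transform_le hb
      _ = M ^ p * 2⁻¹ ^ Fintype.card ι := by rw [hN, inv_pow, ← hMp]; ring
      _ = M ^ p * ((2 : ℝ) ^ (-min 1 (p / 2))) ^ Fintype.card ι := by
          rw [min_eq_left (by linarith), Real.rpow_neg_one]
  · have hw₁ : ∑ _k : ι → Bool, N⁻¹ = 1 := by simp [hN]
    calc _ ≤ (∑ k, N⁻¹ * (N⁻¹ * ∑ i, walsh k i * b i) ^ 2) ^ (p / 2) :=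
          sum_mul_abs_rpow_le_of_le_two (fun _ _ => by positivity) hw₁ hp.le hp₂
      _ ≤ (N⁻¹ * M ^ 2) ^ (p / 2) := by gcongr; exact sum_sq_walsh_transform_le hb
      _ = M ^ p * ((2 : ℝ) ^ (-min 1 (p / 2))) ^ Fintype.card ι := by
          rw [min_eq_right (by linarith), Real.rpow_pow_comm zero_le_two,
            Real.rpow_neg (by positivity), ← Real.inv_rpow (by positivity),
            Real.mul_rpow (by positivity) (by positivity), ← Real.rpow_natCast M 2,
            ← Real.rpow_mul hM, mul_comm, hN]
          ring_nf

end WalshTransform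

lemma norm_sum_lpSingle_of_injective {α ι : Type*} [DecidableEq α] [Fintype ι] {e : ι → α}
    (he : Function.Injective e) (c : ι → ℝ) :
    ‖∑ i, lp.single (E := fun _ : α => ℝ) 1 (e i) (c i)‖ = ∑ i, |c i| := by
  classical
  have h := lp.norm_sum_single (p := 1) (E := fun _ : α => ℝ) (by norm_num)
    (Function.extend e c 0) (univ.map ⟨e, he⟩)
  simpa [he.extend_apply] using h

section WalshVector

variable {α ι : Type*} [DecidableEq α] [Fintype ι] [DecidableEq ι]

noncomputable def walshVector (e : (ι → Bool) → α) (k : ι → Bool) : lp (fun _ : α => ℝ) 1 :=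
  (2 ^ Fintype.card ι : ℝ)⁻¹ • ∑ i, walsh k i • lp.single 1 (e i) 1

lemma norm_walshVector {e : (ι → Bool) → α} (he : Function.Injective e) (k : ι → Bool) :
    ‖walshVector e k‖ = 1 := by
  have hsingle : ∀ i, walsh k i • lp.single 1 (e i) (1 : ℝ)
      = lp.single (E := fun _ : α => ℝ) 1 (e i) (walsh k i) := fun i => by
    rw [← lp.single_smul, smul_eq_mul, mul_one]
  rw [walshVector, norm_smul, Fintype.sum_congr _ _ hsingle, norm_sum_lpSingle_of_injective he]
  simp [abs_walsh]

lemma apply_walshVector (φ : lp (fun _ : α => ℝ) 1 →L[ℝ] ℝ) (e : (ι → Bool) → α)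
    (k : ι → Bool) :
    φ (walshVector e k)
      = (2 ^ Fintype.card ι : ℝ)⁻¹ * ∑ i, walsh k i * φ (lp.single 1 (e i) 1) := by
  simp [walshVector, map_sum]

end WalshVector

/-- Different blocks may share coordinates of `ℓ₁`; only `‖walshVector e k‖ = 1` matters. -/
noncomputable def walshSeq (p : ℝ) (s : Σ m : ℕ, Fin m → Bool) : lp (fun _ : ℕ => ℝ) 1 :=
  ((2 : ℝ) ^ s.1) ^ (-p⁻¹) • walshVector Encodable.encode s.2

lemma norm_walshSeq_rpow {p : ℝ} (hp : p ≠ 0) (s : Σ m : ℕ, Fin m → Bool) :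
    ‖walshSeq p s‖ ^ p = ((2 : ℝ) ^ s.1)⁻¹ := by
  rw [walshSeq, norm_smul, norm_walshVector Encodable.encode_injective, mul_one,
    Real.norm_of_nonneg (by positivity), ← Real.rpow_mul (by positivity), neg_mul,
    inv_mul_cancel₀ hp, Real.rpow_neg_one]

lemma abs_apply_walshSeq_rpow {p : ℝ} (hp : p ≠ 0) (φ : lp (fun _ : ℕ => ℝ) 1 →L[ℝ] ℝ) (m : ℕ)
    (k : Fin m → Bool) :
    |φ (walshSeq p ⟨m, k⟩)| ^ p = ((2 : ℝ) ^ m)⁻¹ *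
      |((2 : ℝ) ^ m)⁻¹ * ∑ i, walsh k i * φ (lp.single 1 (Encodable.encode i) 1)| ^ p := by
  rw [walshSeq, map_smul, apply_walshVector, smul_eq_mul, abs_mul,
    Real.mul_rpow (abs_nonneg _) (abs_nonneg _), abs_of_nonneg (by positivity),
    ← Real.rpow_mul (by positivity), neg_mul, inv_mul_cancel₀ hp, Real.rpow_neg_one,
    Fintype.card_fin]

lemma summable_abs_apply_walshSeq_rpow {p : ℝ} (hp : 0 < p) (φ : lp (fun _ : ℕ => ℝ) 1 →L[ℝ] ℝ) :
    Summable fun s => |φ (walshSeq p s)| ^ p := by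
  set r : ℝ := 2 ^ (-min 1 (p / 2))
  have hr₀ : 0 ≤ r := by positivity
  have hr₁ : r < 1 := Real.rpow_lt_one_of_one_lt_of_neg one_lt_two (by simp [hp])
  have hφ : ∀ j, |φ (lp.single 1 j 1)| ≤ ‖φ‖ := fun j => by
    simpa [lp.norm_single] using φ.le_opNorm (lp.single 1 j (1 : ℝ))
  have hblock : ∀ m, ∑' k : Fin m → Bool, |φ (walshSeq p ⟨m, k⟩)| ^ p ≤ ‖φ‖ ^ p * r ^ m :=
    fun m => by
      simpa [tsum_fintype, abs_apply_walshSeq_rpow hp.ne'] using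
        sum_abs_walsh_transform_rpow_le (ι := Fin m) hp (fun i => hφ (Encodable.encode i))
  rw [summable_sigma_of_nonneg fun _ => by positivity]
  exact ⟨fun m => .of_finite, .of_nonneg_of_le (fun m => by positivity) hblock
    ((summable_geometric_of_lt_one hr₀ hr₁).mul_left _)⟩

lemma not_summable_norm_walshSeq_rpow {p : ℝ} (hp : p ≠ 0) :
    ¬ Summable fun s => ‖walshSeq p s‖ ^ p := by
  rw [summable_sigma_of_nonneg fun _ => by positivity]
  rintro ⟨-, h⟩
  simp [tsum_fintype, norm_walshSeq_rpow hp, summable_const_iff] at h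

theorem stmt12 (p : ℝ) (hp : 0 < p) :
    ∃ x : ℕ → lp (fun _ : ℕ => ℝ) 1,
      (∀ φ : lp (fun _ : ℕ => ℝ) 1 →L[ℝ] ℝ, Summable fun j => |φ (x j)| ^ p) ∧
        ¬ Summable fun j => ‖x j‖ ^ p := by
  obtain ⟨e⟩ := nonempty_equiv_of_countable (α := ℕ) (β := Σ m : ℕ, Fin m → Bool)
  refine ⟨walshSeq p ∘ e, fun φ => ?_, fun h => ?_⟩
  · exact e.summable_iff.mpr (summable_abs_apply_walshSeq_rpow hp φ)
  · exact not_summable_norm_walshSeq_rpow hp.ne' (e.summable_iff.mp h)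
end
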